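/- arXiv:1905.12342 — 2 statements merged into one kernel-verified Lean document; each statement's English description precedes it below -/
import Mathlib

section
/- Let r be the covariance function of a stationary Gaussian process, normalized so r(0)=1, with finite positive second spectral moment λ₂ and finite fourth spectral moment λ₄ with λ₂² < λ₄ < ∞. With μ(τ,u) = r'(τ)u/(1 + r(τ)) and σ²(τ) = λ₂ − r'(τ)²/(1 − r(τ)²), one has (μ(τ,u)/σ(τ))² → λ₂²u²/(λ₄ − λ₂²) as τ → 0⁺. -/
set_option maxHeartbeats 1000000

open MeasureTheory Filter Real Topology

private lemma nonneg_of_deriv {g g' : ℝ → ℝ} (hd : ∀ x, HasDerivAt g (g' x) x)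
    (h0 : g 0 = 0) (h' : ∀ x, 0 ≤ x → 0 ≤ g' x) : ∀ x, 0 ≤ x → 0 ≤ g x := by
  intro x hx
  have hmono : MonotoneOn g (Set.Ici (0:ℝ)) := by
    apply monotoneOn_of_deriv_nonneg (convex_Ici 0)
    · exact fun y _ => ((hd y).differentiableAt).continuousAt.continuousWithinAt
    · exact fun y _ => ((hd y).differentiableAt).differentiableWithinAt
    · intro y hy
      rw [interior_Ici] at hy
      rw [(hd y).deriv]
      exact h' y (le_of_lt hy)
  have := hmono Set.self_mem_Ici (Set.mem_Ici.2 hx) hx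
  linarith [h0 ▸ this]

private lemma sin_lower {x : ℝ} (hx : 0 ≤ x) : x - x^3/6 ≤ Real.sin x := by
  have key := nonneg_of_deriv (g := fun y => Real.sin y - (y - y^3/6))
      (g' := fun y => Real.cos y - (1 - y^2/2)) ?_ (by norm_num) ?_ x hx
  · linarith
  · intro y
    have h1 : HasDerivAt (fun y : ℝ => y - y^3/6) (1 - 3*y^2/6) y := by
      have := (hasDerivAt_id y).sub ((hasDerivAt_pow 3 y).div_const 6)
      exact this.congr_deriv (by push_cast; ring)
    have := (Real.hasDerivAt_sin y).sub h1
    exact this.congr_deriv (by push_cast; ring)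
  · intro y _
    have := Real.one_sub_sq_div_two_le_cos (x := y)
    linarith

private lemma cos_upper (x : ℝ) : Real.cos x ≤ 1 - x^2/2 + x^4/24 := by
  have h : ∀ y : ℝ, 0 ≤ y → Real.cos y ≤ 1 - y^2/2 + y^4/24 := by
    intro y hy
    have key := nonneg_of_deriv (g := fun z => 1 - z^2/2 + z^4/24 - Real.cos z)
        (g' := fun z => -z + z^3/6 + Real.sin z) ?_ (by norm_num) ?_ y hy
    · linarith
    · intro z
      have h1 : HasDerivAt (fun z : ℝ => 1 - z^2/2 + z^4/24) (-(2*z)/2 + 4*z^3/24) z := by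
        have := (((hasDerivAt_const z (1:ℝ)).sub ((hasDerivAt_pow 2 z).div_const 2)).add
          ((hasDerivAt_pow 4 z).div_const 24))
        exact this.congr_deriv (by push_cast; ring)
      have := h1.sub (Real.hasDerivAt_cos z)
      exact this.congr_deriv (by ring)
    · intro z hz
      have := sin_lower hz
      linarith
  have h4 : |x|^4 = x^4 := by
    rw [pow_abs]; exact abs_of_nonneg (by positivity)
  calc Real.cos x = Real.cos |x| := (Real.cos_abs x).symm
    _ ≤ 1 - |x|^2/2 + |x|^4/24 := h _ (abs_nonneg x)
    _ = 1 - x^2/2 + x^4/24 := by rw [sq_abs, h4]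

private lemma sin_upper {x : ℝ} (hx : 0 ≤ x) : Real.sin x ≤ x - x^3/6 + x^5/120 := by
  have key := nonneg_of_deriv (g := fun y => y - y^3/6 + y^5/120 - Real.sin y)
      (g' := fun y => 1 - 3*y^2/6 + 5*y^4/120 - Real.cos y) ?_ (by norm_num) ?_ x hx
  · linarith
  · intro y
    have := (((hasDerivAt_id y).sub ((hasDerivAt_pow 3 y).div_const 6)).add
      ((hasDerivAt_pow 5 y).div_const 120)).sub (Real.hasDerivAt_sin y)
    exact this.congr_deriv (by push_cast; ring)
  · intro y _
    have := cos_upper y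
    nlinarith [sq_nonneg y, sq_nonneg (y^2)]

private lemma cos_lower6 (x : ℝ) : 1 - x^2/2 + x^4/24 - x^6/720 ≤ Real.cos x := by
  have h : ∀ y : ℝ, 0 ≤ y → 1 - y^2/2 + y^4/24 - y^6/720 ≤ Real.cos y := by
    intro y hy
    have key := nonneg_of_deriv
        (g := fun z => Real.cos z - (1 - z^2/2 + z^4/24 - z^6/720))
        (g' := fun z => -Real.sin z - (-(2*z)/2 + 4*z^3/24 - 6*z^5/720)) ?_ (by norm_num) ?_ y hy
    · linarith
    · intro z
      have h1 : HasDerivAt (fun z : ℝ => 1 - z^2/2 + z^4/24 - z^6/720)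
          (-(2*z)/2 + 4*z^3/24 - 6*z^5/720) z := by
        have := ((((hasDerivAt_const z (1:ℝ)).sub ((hasDerivAt_pow 2 z).div_const 2)).add
          ((hasDerivAt_pow 4 z).div_const 24)).sub ((hasDerivAt_pow 6 z).div_const 720))
        exact this.congr_deriv (by push_cast; ring)
      exact (Real.hasDerivAt_cos z).sub h1
    · intro z hz
      have := sin_upper hz
      nlinarith
  have h4 : |x|^4 = x^4 := by rw [pow_abs]; exact abs_of_nonneg (by positivity)
  have h6 : |x|^6 = x^6 := by rw [pow_abs]; exact abs_of_nonneg (by positivity)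
  calc (1:ℝ) - x^2/2 + x^4/24 - x^6/720 = 1 - |x|^2/2 + |x|^4/24 - |x|^6/720 := by
        rw [sq_abs, h4, h6]
    _ ≤ Real.cos |x| := h _ (abs_nonneg x)
    _ = Real.cos x := Real.cos_abs x

private lemma abs_cos4 (x : ℝ) : |Real.cos x - 1 + x^2/2| ≤ x^4/24 := by
  have h1 := Real.one_sub_sq_div_two_le_cos (x := x)
  have h2 := cos_upper x
  rw [abs_le]
  constructor <;> nlinarith [sq_nonneg (x^2)]

private lemma abs_cos6 (x : ℝ) : |Real.cos x - 1 + x^2/2 - x^4/24| ≤ x^6/720 := by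
  have h1 := cos_lower6 x
  have h2 := cos_upper x
  rw [abs_le]
  constructor <;> nlinarith [sq_nonneg (x^3)]

private lemma abs_sin3 (x : ℝ) : |x - Real.sin x| ≤ |x|^3/6 := by
  have h : ∀ y : ℝ, 0 ≤ y → |y - Real.sin y| ≤ |y|^3/6 := by
    intro y hy
    rw [abs_of_nonneg hy, abs_le]
    have h1 := sin_lower hy
    have h2 := Real.sin_le hy
    constructor <;> nlinarith [pow_nonneg hy 3]
  rcases le_or_gt 0 x with hx | hx
  · exact h x hx
  · have := h (-x) (by linarith)
    rw [Real.sin_neg] at this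
    calc |x - Real.sin x| = |(-x) - -Real.sin x| := by rw [← abs_neg]; ring_nf
      _ ≤ |(-x)|^3/6 := this
      _ = |x|^3/6 := by rw [abs_neg]

private lemma abs_sin5 (x : ℝ) : |x - Real.sin x - x^3/6| ≤ |x|^5/120 := by
  have h : ∀ y : ℝ, 0 ≤ y → |y - Real.sin y - y^3/6| ≤ |y|^5/120 := by
    intro y hy
    rw [abs_of_nonneg hy, abs_le]
    have h1 := sin_lower hy
    have h2 := sin_upper hy
    constructor <;> nlinarith [pow_nonneg hy 5]
  rcases le_or_gt 0 x with hx | hx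
  · exact h x hx
  · have := h (-x) (by linarith)
    rw [Real.sin_neg] at this
    calc |x - Real.sin x - x^3/6| = |(-x) - -Real.sin x - (-x)^3/6| := by
          rw [← abs_neg]; ring_nf
      _ ≤ |(-x)|^5/120 := this
      _ = |x|^5/120 := by rw [abs_neg]


/-- For a stationary Gaussian process with spectral (probability) measure `ν`, covariance
`r(τ) = ∫ cos(τλ) dν(λ)`, finite second and fourth spectral moments `λ₂, λ₄` with
`0 < λ₂` and `λ₂² < λ₄ < ∞`, the ratio `(μ(τ,u)/σ(τ))²`, where
`μ(τ,u) = r'(τ)u/(1+r(τ))` and `σ²(τ) = λ₂ - r'(τ)²/(1-r(τ)²)`, tends to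
`λ₂²u²/(λ₄ - λ₂²)` as `τ → 0⁺`. -/
theorem ratio_tendsto_of_finite_fourth_moment (ν : Measure ℝ) [IsProbabilityMeasure ν]
    (hsym : ν.map (fun x => -x) = ν)
    (lam2 lam4 u : ℝ)
    (h2 : Integrable (fun l => l ^ 2) ν) (h4 : Integrable (fun l => l ^ 4) ν)
    (hlam2 : lam2 = ∫ l, l ^ 2 ∂ν) (hlam4 : lam4 = ∫ l, l ^ 4 ∂ν)
    (hpos : 0 < lam2) (hlt : lam2 ^ 2 < lam4)
    (r : ℝ → ℝ) (hr : ∀ τ, r τ = ∫ l, Real.cos (τ * l) ∂ν) :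
    Tendsto
      (fun τ => ((deriv r τ * u / (1 + r τ)) /
          Real.sqrt (lam2 - (deriv r τ) ^ 2 / (1 - (r τ) ^ 2))) ^ 2)
      (nhdsWithin 0 (Set.Ioi 0))
      (nhds (lam2 ^ 2 * u ^ 2 / (lam4 - lam2 ^ 2))) := by
  have hrfun : r = fun τ => ∫ l, Real.cos (τ * l) ∂ν := funext hr
  subst hrfun
  have h42 : (0:ℝ) < lam4 - lam2 ^ 2 := by linarith
  -- basic integrability
  have hint_cos : ∀ τ : ℝ, Integrable (fun a => Real.cos (τ * a)) ν := by
    intro τ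
    refine (integrable_const (1:ℝ)).mono (Continuous.aestronglyMeasurable (by fun_prop))
      (Filter.Eventually.of_forall fun a => ?_)
    simp [Real.abs_cos_le_one]
  have habs : Integrable (fun a : ℝ => |a|) ν := by
    refine ((integrable_const (1:ℝ)).add h2).mono continuous_abs.aestronglyMeasurable
      (Filter.Eventually.of_forall fun a => ?_)
    have h1 : |a| ≤ 1 + a ^ 2 := by nlinarith [sq_abs a, sq_nonneg (|a| - 1)]
    have h2' : (0:ℝ) ≤ 1 + a ^ 2 := by positivity
    simpa [abs_of_nonneg h2'] using h1
  have hint_sin : ∀ τ : ℝ, Integrable (fun a => a * Real.sin (τ * a)) ν := by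
    intro τ
    refine habs.mono (Continuous.aestronglyMeasurable (by fun_prop))
      (Filter.Eventually.of_forall fun a => ?_)
    simp only [Real.norm_eq_abs, abs_mul, abs_abs]
    calc |a| * |Real.sin (τ * a)| ≤ |a| * 1 :=
          mul_le_mul_of_nonneg_left (Real.abs_sin_le_one _) (abs_nonneg a)
      _ = |a| := mul_one _
  -- derivative of r
  have hderiv : ∀ τ₀ : ℝ, HasDerivAt (fun τ => ∫ a, Real.cos (τ * a) ∂ν)
      (∫ a, -(a * Real.sin (τ₀ * a)) ∂ν) τ₀ := by
    intro τ₀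
    have key := hasDerivAt_integral_of_dominated_loc_of_deriv_le (μ := ν)
      (F := fun τ a => Real.cos (τ * a)) (F' := fun τ a => -(a * Real.sin (τ * a)))
      (x₀ := τ₀) (s := Set.univ) (bound := fun a => |a|) Filter.univ_mem
      (Filter.Eventually.of_forall fun τ => (by fun_prop : Continuous fun a : ℝ =>
        Real.cos (τ * a)).aestronglyMeasurable)
      (hint_cos τ₀) (Continuous.aestronglyMeasurable (by fun_prop))
      (Filter.Eventually.of_forall fun a τ _ => ?_) habs
      (Filter.Eventually.of_forall fun a τ _ => ?_)
    · exact key.2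
    · simp only [norm_neg, Real.norm_eq_abs, abs_mul]
      calc |a| * |Real.sin (τ * a)| ≤ |a| * 1 :=
            mul_le_mul_of_nonneg_left (Real.abs_sin_le_one _) (abs_nonneg a)
        _ = |a| := mul_one _
    · have h1 : HasDerivAt (fun τ : ℝ => τ * a) a τ := hasDerivAt_mul_const a
      have := (Real.hasDerivAt_cos (τ * a)).comp τ h1
      exact this.congr_deriv (by ring)
  have hr' : ∀ τ : ℝ, deriv (fun τ => ∫ a, Real.cos (τ * a) ∂ν) τ
      = -∫ a, a * Real.sin (τ * a) ∂ν := by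
    intro τ
    rw [(hderiv τ).deriv, integral_neg]
  -- the two normalized remainder functions
  set S : ℝ → ℝ := fun τ => ∫ a, (a ^ 2 * τ ^ 2 / 2 - (1 - Real.cos (τ * a))) / τ ^ 4 ∂ν with hSdef
  set T : ℝ → ℝ := fun τ => ∫ a, a * (τ * a - Real.sin (τ * a)) / τ ^ 3 ∂ν with hTdef
  have hS : Tendsto S (𝓝[>] 0) (𝓝 (lam4 / 24)) := by
    have hint : (∫ a : ℝ, a ^ 4 / 24 ∂ν) = lam4 / 24 := by rw [integral_div, ← hlam4]
    rw [hSdef, ← hint]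
    apply tendsto_integral_filter_of_dominated_convergence (bound := fun a : ℝ => a ^ 4 / 24)
    · exact Filter.Eventually.of_forall fun τ => Continuous.aestronglyMeasurable (by fun_prop)
    · filter_upwards [self_mem_nhdsWithin] with τ hτ
      have hτp : (0:ℝ) < τ := hτ
      refine Filter.Eventually.of_forall fun a => ?_
      have hkey : (a ^ 2 * τ ^ 2 / 2 - (1 - Real.cos (τ * a))) / τ ^ 4
          = (Real.cos (τ * a) - 1 + (τ * a) ^ 2 / 2) / τ ^ 4 := by ring_nf
      rw [Real.norm_eq_abs, hkey, abs_div, abs_of_pos (by positivity : (0:ℝ) < τ ^ 4)]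
      calc |Real.cos (τ * a) - 1 + (τ * a) ^ 2 / 2| / τ ^ 4
          ≤ ((τ * a) ^ 4 / 24) / τ ^ 4 := by gcongr; exact abs_cos4 (τ * a)
        _ = a ^ 4 / 24 := by
            rw [div_div, div_eq_div_iff (by positivity) (by norm_num : (24:ℝ) ≠ 0)]
            ring
    · exact h4.div_const 24
    · refine Filter.Eventually.of_forall fun a => ?_
      rw [← tendsto_sub_nhds_zero_iff]
      apply squeeze_zero_norm' (a := fun τ : ℝ => τ ^ 2 * a ^ 6 / 720)
      · filter_upwards [self_mem_nhdsWithin] with τ hτ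
        have hτp : (0:ℝ) < τ := hτ
        have hτne : τ ≠ 0 := ne_of_gt hτp
        have hkey : (a ^ 2 * τ ^ 2 / 2 - (1 - Real.cos (τ * a))) / τ ^ 4 - a ^ 4 / 24
            = (Real.cos (τ * a) - 1 + (τ * a) ^ 2 / 2 - (τ * a) ^ 4 / 24) / τ ^ 4 := by
          field_simp
          ring
        rw [Real.norm_eq_abs, hkey, abs_div, abs_of_pos (by positivity : (0:ℝ) < τ ^ 4)]
        calc |Real.cos (τ * a) - 1 + (τ * a) ^ 2 / 2 - (τ * a) ^ 4 / 24| / τ ^ 4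
            ≤ ((τ * a) ^ 6 / 720) / τ ^ 4 := by gcongr; exact abs_cos6 (τ * a)
          _ = τ ^ 2 * a ^ 6 / 720 := by
              rw [div_div, div_eq_div_iff (by positivity) (by norm_num : (720:ℝ) ≠ 0)]
              ring
      · have hcont : Continuous fun τ : ℝ => τ ^ 2 * a ^ 6 / 720 := by fun_prop
        have h0 := (hcont.tendsto 0).mono_left (nhdsWithin_le_nhds (s := Set.Ioi (0:ℝ)))
        simpa using h0
  have hT : Tendsto T (𝓝[>] 0) (𝓝 (lam4 / 6)) := by
    have hint : (∫ a : ℝ, a ^ 4 / 6 ∂ν) = lam4 / 6 := by rw [integral_div, ← hlam4]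
    rw [hTdef, ← hint]
    apply tendsto_integral_filter_of_dominated_convergence (bound := fun a : ℝ => a ^ 4 / 6)
    · exact Filter.Eventually.of_forall fun τ => Continuous.aestronglyMeasurable (by fun_prop)
    · filter_upwards [self_mem_nhdsWithin] with τ hτ
      have hτp : (0:ℝ) < τ := hτ
      refine Filter.Eventually.of_forall fun a => ?_
      have h4a : |a| ^ 4 = a ^ 4 := by rw [pow_abs]; exact abs_of_nonneg (by positivity)
      rw [Real.norm_eq_abs, abs_div, abs_of_pos (by positivity : (0:ℝ) < τ ^ 3), abs_mul]
      calc |a| * |τ * a - Real.sin (τ * a)| / τ ^ 3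
          ≤ |a| * (|τ * a| ^ 3 / 6) / τ ^ 3 := by gcongr; exact abs_sin3 (τ * a)
        _ = a ^ 4 / 6 := by
            rw [show |τ * a| = τ * |a| from by rw [abs_mul, abs_of_pos hτp],
              div_eq_div_iff (by positivity) (by norm_num : (6:ℝ) ≠ 0), ← h4a]
            ring
    · exact h4.div_const 6
    · refine Filter.Eventually.of_forall fun a => ?_
      rw [← tendsto_sub_nhds_zero_iff]
      apply squeeze_zero_norm' (a := fun τ : ℝ => τ ^ 2 * a ^ 6 / 120)
      · filter_upwards [self_mem_nhdsWithin] with τ hτ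
        have hτp : (0:ℝ) < τ := hτ
        have hτne : τ ≠ 0 := ne_of_gt hτp
        have h6a : |a| ^ 6 = a ^ 6 := by rw [pow_abs]; exact abs_of_nonneg (by positivity)
        have hkey : a * (τ * a - Real.sin (τ * a)) / τ ^ 3 - a ^ 4 / 6
            = a * (τ * a - Real.sin (τ * a) - (τ * a) ^ 3 / 6) / τ ^ 3 := by
          field_simp
        rw [Real.norm_eq_abs, hkey, abs_div, abs_of_pos (by positivity : (0:ℝ) < τ ^ 3), abs_mul]
        calc |a| * |τ * a - Real.sin (τ * a) - (τ * a) ^ 3 / 6| / τ ^ 3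
            ≤ |a| * (|τ * a| ^ 5 / 120) / τ ^ 3 := by gcongr; exact abs_sin5 (τ * a)
          _ = τ ^ 2 * a ^ 6 / 120 := by
              rw [show |τ * a| = τ * |a| from by rw [abs_mul, abs_of_pos hτp],
                div_eq_div_iff (by positivity) (by norm_num : (120:ℝ) ≠ 0), ← h6a]
              ring
      · have hcont : Continuous fun τ : ℝ => τ ^ 2 * a ^ 6 / 120 := by fun_prop
        have h0 := (hcont.tendsto 0).mono_left (nhdsWithin_le_nhds (s := Set.Ioi (0:ℝ)))
        simpa using h0
  -- expressing r and deriv r via S, T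
  have hrS : ∀ τ : ℝ, 0 < τ → (∫ a, Real.cos (τ * a) ∂ν)
      = 1 - lam2 * τ ^ 2 / 2 + S τ * τ ^ 4 := by
    intro τ hτp
    have hτne : τ ≠ 0 := ne_of_gt hτp
    have hi1 : Integrable (fun a : ℝ => a ^ 2 * (τ ^ 2 / 2)) ν := h2.mul_const _
    have hi2 : Integrable (fun a : ℝ => 1 - Real.cos (τ * a)) ν :=
      (integrable_const 1).sub (hint_cos τ)
    have hint2 : (∫ a, (1 - Real.cos (τ * a)) ∂ν) = 1 - ∫ a, Real.cos (τ * a) ∂ν := by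
      rw [integral_sub (integrable_const 1) (hint_cos τ), integral_const]
      simp
    have hSτ : S τ * τ ^ 4 = lam2 * (τ ^ 2 / 2) - (1 - ∫ a, Real.cos (τ * a) ∂ν) := by
      rw [hSdef]
      simp only
      rw [show (fun a : ℝ => (a ^ 2 * τ ^ 2 / 2 - (1 - Real.cos (τ * a))) / τ ^ 4)
          = fun a : ℝ => (a ^ 2 * (τ ^ 2 / 2) - (1 - Real.cos (τ * a))) / τ ^ 4 from
          funext fun a => by ring]
      rw [integral_div, div_mul_cancel₀ _ (pow_ne_zero 4 hτne),
        integral_sub hi1 hi2, integral_mul_const, ← hlam2, hint2]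
    linarith [hSτ]
  have hdT : ∀ τ : ℝ, 0 < τ → deriv (fun τ => ∫ a, Real.cos (τ * a) ∂ν) τ
      = -(lam2 * τ) + T τ * τ ^ 3 := by
    intro τ hτp
    have hτne : τ ≠ 0 := ne_of_gt hτp
    have hi1 : Integrable (fun a : ℝ => τ * a ^ 2) ν := h2.const_mul τ
    have hTτ : T τ * τ ^ 3 = τ * lam2 - ∫ a, a * Real.sin (τ * a) ∂ν := by
      rw [hTdef]
      simp only
      rw [show (fun a : ℝ => a * (τ * a - Real.sin (τ * a)) / τ ^ 3)
          = fun a : ℝ => (τ * a ^ 2 - a * Real.sin (τ * a)) / τ ^ 3 from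
          funext fun a => by ring]
      rw [integral_div, div_mul_cancel₀ _ (pow_ne_zero 3 hτne),
        integral_sub hi1 (hint_sin τ), integral_const_mul, ← hlam2]
    rw [hr' τ]
    linarith [hTτ]
  -- the limit function
  set ψ : ℝ × ℝ × ℝ → ℝ := fun p =>
    (lam2 - p.2.2 * p.1 ^ 2) ^ 2 * u ^ 2 * (lam2 / 2 - p.2.1 * p.1 ^ 2) /
      ((2 - lam2 * p.1 ^ 2 / 2 + p.2.1 * p.1 ^ 4) *
        (-lam2 ^ 3 / 4 - 2 * lam2 * p.2.1 + 2 * lam2 * p.2.2 +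
          p.1 ^ 2 * (lam2 ^ 2 * p.2.1 - p.2.2 ^ 2) - lam2 * p.2.1 ^ 2 * p.1 ^ 4)) with hψdef
  have hτ0 : Tendsto (fun τ : ℝ => τ) (𝓝[>] 0) (𝓝 0) :=
    tendsto_id.mono_right nhdsWithin_le_nhds
  have hpair : Tendsto (fun τ => (τ, S τ, T τ)) (𝓝[>] 0)
      (𝓝 ((0:ℝ), lam4 / 24, lam4 / 6)) :=
    hτ0.prodMk_nhds (hS.prodMk_nhds hT)
  have hGval : (-lam2 ^ 3 / 4 - 2 * lam2 * (lam4 / 24) + 2 * lam2 * (lam4 / 6) +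
      (0:ℝ) ^ 2 * (lam2 ^ 2 * (lam4 / 24) - (lam4 / 6) ^ 2) - lam2 * (lam4 / 24) ^ 2 * 0 ^ 4)
      = lam2 * (lam4 - lam2 ^ 2) / 4 := by ring
  have hPne : ((2:ℝ) - lam2 * (0:ℝ) ^ 2 / 2 + lam4 / 24 * (0:ℝ) ^ 4) *
      (-lam2 ^ 3 / 4 - 2 * lam2 * (lam4 / 24) + 2 * lam2 * (lam4 / 6) +
          (0:ℝ) ^ 2 * (lam2 ^ 2 * (lam4 / 24) - (lam4 / 6) ^ 2) -
          lam2 * (lam4 / 24) ^ 2 * (0:ℝ) ^ 4) ≠ 0 := by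
    have hval : ((2:ℝ) - lam2 * (0:ℝ) ^ 2 / 2 + lam4 / 24 * (0:ℝ) ^ 4) *
        (-lam2 ^ 3 / 4 - 2 * lam2 * (lam4 / 24) + 2 * lam2 * (lam4 / 6) +
          (0:ℝ) ^ 2 * (lam2 ^ 2 * (lam4 / 24) - (lam4 / 6) ^ 2) -
          lam2 * (lam4 / 24) ^ 2 * (0:ℝ) ^ 4) = lam2 * (lam4 - lam2 ^ 2) / 2 := by ring
    rw [hval]
    exact ne_of_gt (by nlinarith [mul_pos hpos h42])
  have hψcont : ContinuousAt ψ ((0:ℝ), lam4 / 24, lam4 / 6) := by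
    rw [hψdef]
    exact ContinuousAt.div (by fun_prop) (by fun_prop) hPne
  have hψval : ψ ((0:ℝ), lam4 / 24, lam4 / 6) = lam2 ^ 2 * u ^ 2 / (lam4 - lam2 ^ 2) := by
    have hbeta : ψ ((0:ℝ), lam4 / 24, lam4 / 6) =
        (lam2 - lam4 / 6 * (0:ℝ) ^ 2) ^ 2 * u ^ 2 * (lam2 / 2 - lam4 / 24 * (0:ℝ) ^ 2) /
          (((2:ℝ) - lam2 * (0:ℝ) ^ 2 / 2 + lam4 / 24 * (0:ℝ) ^ 4) *
            (-lam2 ^ 3 / 4 - 2 * lam2 * (lam4 / 24) + 2 * lam2 * (lam4 / 6) +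
          (0:ℝ) ^ 2 * (lam2 ^ 2 * (lam4 / 24) - (lam4 / 6) ^ 2) -
          lam2 * (lam4 / 24) ^ 2 * (0:ℝ) ^ 4)) := by rw [hψdef]
    rw [hbeta, div_eq_div_iff hPne h42.ne']
    ring
  have hψlim : Tendsto (fun τ => ψ (τ, S τ, T τ)) (𝓝[>] 0)
      (𝓝 (lam2 ^ 2 * u ^ 2 / (lam4 - lam2 ^ 2))) := by
    have h := hψcont.tendsto.comp hpair
    rw [hψval] at h
    exact h
  -- eventual positivity facts
  have hc1 : ∀ᶠ τ in 𝓝[>] (0:ℝ), 0 < lam2 / 2 - S τ * τ ^ 2 := by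
    have hcont : ContinuousAt (fun p : ℝ × ℝ × ℝ => lam2 / 2 - p.2.1 * p.1 ^ 2)
        ((0:ℝ), lam4 / 24, lam4 / 6) := by fun_prop
    have h := hcont.tendsto.comp hpair
    exact h.eventually (eventually_gt_nhds (by simp only []; nlinarith))
  have hc2 : ∀ᶠ τ in 𝓝[>] (0:ℝ), 0 < -lam2 ^ 3 / 4 - 2 * lam2 * S τ + 2 * lam2 * T τ +
      τ ^ 2 * (lam2 ^ 2 * S τ - (T τ) ^ 2) - lam2 * (S τ) ^ 2 * τ ^ 4 := by
    have h : Tendsto (fun τ => -lam2 ^ 3 / 4 - 2 * lam2 * S τ + 2 * lam2 * T τ +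
        τ ^ 2 * (lam2 ^ 2 * S τ - (T τ) ^ 2) - lam2 * (S τ) ^ 2 * τ ^ 4) (𝓝[>] 0)
        (𝓝 (lam2 * (lam4 - lam2 ^ 2) / 4)) := by
      have hcont : ContinuousAt (fun p : ℝ × ℝ × ℝ => -lam2 ^ 3 / 4 - 2 * lam2 * p.2.1 +
          2 * lam2 * p.2.2 + p.1 ^ 2 * (lam2 ^ 2 * p.2.1 - p.2.2 ^ 2) -
          lam2 * p.2.1 ^ 2 * p.1 ^ 4) ((0:ℝ), lam4 / 24, lam4 / 6) := by fun_prop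
      have := hcont.tendsto.comp hpair
      rw [hGval] at this
      exact this
    exact h.eventually (eventually_gt_nhds (by positivity))
  have hc3 : ∀ᶠ τ in 𝓝[>] (0:ℝ), 0 < 2 - lam2 * τ ^ 2 / 2 + S τ * τ ^ 4 := by
    have hcont : ContinuousAt (fun p : ℝ × ℝ × ℝ => 2 - lam2 * p.1 ^ 2 / 2 + p.2.1 * p.1 ^ 4)
        ((0:ℝ), lam4 / 24, lam4 / 6) := by fun_prop
    have h := hcont.tendsto.comp hpair
    exact h.eventually (eventually_gt_nhds (by simp only []; nlinarith))
  -- eventual equality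
  have heq : ∀ᶠ τ in 𝓝[>] (0:ℝ),
      ((deriv (fun τ => ∫ a, Real.cos (τ * a) ∂ν) τ * u / (1 + (∫ a, Real.cos (τ * a) ∂ν))) /
        Real.sqrt (lam2 - (deriv (fun τ => ∫ a, Real.cos (τ * a) ∂ν) τ) ^ 2 /
          (1 - (∫ a, Real.cos (τ * a) ∂ν) ^ 2))) ^ 2 = ψ (τ, S τ, T τ) := by
    filter_upwards [self_mem_nhdsWithin, hc1, hc2, hc3] with τ hτ h1 hG2 h3
    have hτpos : 0 < τ := hτ
    have hτne : τ ≠ 0 := ne_of_gt hτpos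
    set s := S τ
    set t := T τ
    rw [hrS τ hτpos, hdT τ hτpos]
    set G : ℝ := -lam2 ^ 3 / 4 - 2 * lam2 * s + 2 * lam2 * t +
      τ ^ 2 * (lam2 ^ 2 * s - t ^ 2) - lam2 * s ^ 2 * τ ^ 4 with hGdef
    have hGpos : 0 < G := hG2
    have h1r : (1:ℝ) + (1 - lam2 * τ ^ 2 / 2 + s * τ ^ 4) = 2 - lam2 * τ ^ 2 / 2 + s * τ ^ 4 := by
      ring
    have h1rpos : 0 < (1:ℝ) + (1 - lam2 * τ ^ 2 / 2 + s * τ ^ 4) := by rw [h1r]; exact h3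
    have hmr : (1:ℝ) - (1 - lam2 * τ ^ 2 / 2 + s * τ ^ 4) = τ ^ 2 * (lam2 / 2 - s * τ ^ 2) := by
      ring
    have hmrpos : 0 < (1:ℝ) - (1 - lam2 * τ ^ 2 / 2 + s * τ ^ 4) := by
      rw [hmr]; positivity
    have hsq : (1:ℝ) - (1 - lam2 * τ ^ 2 / 2 + s * τ ^ 4) ^ 2 =
        ((1:ℝ) - (1 - lam2 * τ ^ 2 / 2 + s * τ ^ 4)) *
        ((1:ℝ) + (1 - lam2 * τ ^ 2 / 2 + s * τ ^ 4)) := by ring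
    have hsqpos : 0 < (1:ℝ) - (1 - lam2 * τ ^ 2 / 2 + s * τ ^ 4) ^ 2 := by
      rw [hsq]; exact mul_pos hmrpos h1rpos
    have hC : (1:ℝ) - (1 - lam2 * τ ^ 2 / 2 + s * τ ^ 4) ^ 2 =
        τ ^ 2 * ((lam2 / 2 - s * τ ^ 2) * (1 + (1 - lam2 * τ ^ 2 / 2 + s * τ ^ 4))) := by
      ring
    have hσ : lam2 - (-(lam2 * τ) + t * τ ^ 3) ^ 2 /
        (1 - (1 - lam2 * τ ^ 2 / 2 + s * τ ^ 4) ^ 2) =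
        τ ^ 2 * G / ((lam2 / 2 - s * τ ^ 2) * (1 + (1 - lam2 * τ ^ 2 / 2 + s * τ ^ 4))) := by
      have ne1 : τ ^ 2 * ((lam2 / 2 - s * τ ^ 2) * (1 + (1 - lam2 * τ ^ 2 / 2 + s * τ ^ 4)))
          ≠ 0 := (mul_pos (pow_pos hτpos 2) (mul_pos h1 h1rpos)).ne'
      have ne2 : (lam2 / 2 - s * τ ^ 2) * (1 + (1 - lam2 * τ ^ 2 / 2 + s * τ ^ 4)) ≠ 0 :=
        (mul_pos h1 h1rpos).ne'
      rw [hC, sub_div' ne1, div_eq_div_iff ne1 ne2, hGdef]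
      ring
    have hσpos : 0 < lam2 - (-(lam2 * τ) + t * τ ^ 3) ^ 2 /
        (1 - (1 - lam2 * τ ^ 2 / 2 + s * τ ^ 4) ^ 2) := by
      rw [hσ]
      exact div_pos (by positivity) (mul_pos h1 h1rpos)
    rw [div_pow, Real.sq_sqrt hσpos.le, hσ]
    simp only [hψdef]
    rw [← hGdef, ← h1r]
    have ne3 : τ ^ 2 * G ≠ 0 := (mul_pos (pow_pos hτpos 2) hGpos).ne'
    have ne4 : (1 + (1 - lam2 * τ ^ 2 / 2 + s * τ ^ 4)) * G ≠ 0 :=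
      (mul_pos h1rpos hGpos).ne'
    rw [div_div_eq_mul_div, div_eq_div_iff ne3 ne4, div_pow, div_mul_eq_mul_div,
      div_mul_eq_mul_div, div_eq_iff (pow_ne_zero 2 h1rpos.ne')]
    ring
  exact hψlim.congr' (heq.mono fun τ h => h.symm)
end

section
/- Let μ be a symmetric finite measure on ℝ with λ₂ = ∫λ²dμ ∈ (0,∞) and λ₄ = ∫λ⁴dμ = +∞, and r(τ) = ∫cos(τλ)dμ(λ), r(0)=1. With σ²(τ) = λ₂ − r'(τ)²/(1 − r(τ)²), one has r'(τ)/σ(τ) → 0 as τ → 0⁺. -/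
open MeasureTheory Filter Real Topology

lemma aux_sin_div : Tendsto (fun y => Real.sin y / y) (𝓝[≠] (0:ℝ)) (𝓝 1) := by
  have h := Real.hasDerivAt_sin 0
  rw [hasDerivAt_iff_tendsto_slope] at h
  simp only [slope_fun_def, Real.sin_zero, Real.cos_zero, sub_zero] at h
  apply h.congr
  intro y; simp [div_eq_inv_mul]

lemma aux_sin_mul (c : ℝ) : Tendsto (fun τ => Real.sin (τ * c) / τ) (𝓝[>] (0:ℝ)) (𝓝 c) := by
  rcases eq_or_ne c 0 with rfl | hc
  · simp
  · have h1 : Tendsto (fun τ : ℝ => τ * c) (𝓝[>] (0:ℝ)) (𝓝[≠] (0:ℝ)) := by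
      apply tendsto_nhdsWithin_of_tendsto_nhds_of_eventually_within
      · have : Tendsto (fun τ : ℝ => τ * c) (𝓝 (0:ℝ)) (𝓝 (0*c)) :=
          (continuous_id.mul continuous_const).tendsto 0
        rw [zero_mul] at this
        exact this.mono_left nhdsWithin_le_nhds
      · filter_upwards [self_mem_nhdsWithin] with τ (hτ : 0 < τ)
        simp [hτ.ne', hc]
    have h2 := (aux_sin_div.comp h1).const_mul c
    rw [mul_one] at h2
    apply h2.congr'
    filter_upwards [self_mem_nhdsWithin] with τ (hτ : 0 < τ)
    simp only [Function.comp]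
    field_simp

lemma aux_sinsq_mul (c : ℝ) :
    Tendsto (fun τ => Real.sin (τ * c) ^ 2 / τ ^ 2) (𝓝[>] (0:ℝ)) (𝓝 (c ^ 2)) := by
  have h := (aux_sin_mul c).mul (aux_sin_mul c)
  have : c * c = c ^ 2 := by ring
  rw [this] at h
  apply h.congr
  intro τ
  rw [div_mul_div_comm]
  ring_nf

lemma aux_one_sub_cos (x : ℝ) : 1 - Real.cos x = 2 * Real.sin (x/2) ^ 2 := by
  have h := Real.cos_two_mul (x/2)
  have p := Real.sin_sq_add_cos_sq (x/2)
  rw [show 2*(x/2) = x by ring] at h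
  linarith

section
variable (ν : Measure ℝ) [IsProbabilityMeasure ν] (h2 : Integrable (fun l => l^2) ν)
include h2

lemma aux_abs_int : Integrable (fun l => |l|) ν := by
  apply Integrable.mono' ((integrable_const (1:ℝ)).add h2)
  · exact continuous_abs.aestronglyMeasurable
  · filter_upwards with l
    have : |l| ≤ 1 + l^2 := by nlinarith [sq_nonneg (|l| - 1), sq_abs l]
    simpa using this

lemma aux_sinsq_int (τ : ℝ) : Integrable (fun l => Real.sin (τ*l/2)^2) ν := by
  apply Integrable.mono' (integrable_const (1:ℝ))
  · exact ((Real.continuous_sin.comp ((continuous_const.mul continuous_id).div_const 2)).pow 2).aestronglyMeasurable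
  · filter_upwards with l
    rw [norm_eq_abs, abs_of_nonneg (sq_nonneg _)]
    nlinarith [Real.neg_one_le_sin (τ*l/2), Real.sin_le_one (τ*l/2)]

lemma aux_lsinsq_int (τ : ℝ) : Integrable (fun l => l^2 * Real.sin (τ*l/2)^2) ν := by
  apply Integrable.mono' h2
  · exact ((continuous_pow 2).mul ((Real.continuous_sin.comp ((continuous_const.mul continuous_id).div_const 2)).pow 2)).aestronglyMeasurable
  · filter_upwards with l
    rw [norm_eq_abs, abs_mul, abs_of_nonneg (sq_nonneg l), abs_of_nonneg (sq_nonneg _)]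
    have hs : Real.sin (τ*l/2)^2 ≤ 1 := by
      nlinarith [Real.neg_one_le_sin (τ*l/2), Real.sin_le_one (τ*l/2)]
    nlinarith [sq_nonneg l, sq_nonneg (Real.sin (τ*l/2))]

lemma aux_lsin_int (τ : ℝ) : Integrable (fun l => Real.sin (τ*l) * l) ν := by
  apply Integrable.mono' (aux_abs_int ν h2)
  · exact ((Real.continuous_sin.comp (continuous_const.mul continuous_id)).mul continuous_id).aestronglyMeasurable
  · filter_upwards with l
    rw [norm_eq_abs, abs_mul]
    exact mul_le_of_le_one_left (abs_nonneg _) (Real.abs_sin_le_one _)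

end

lemma aux_deriv (ν : Measure ℝ) [IsProbabilityMeasure ν]
    (h2 : Integrable (fun l => l^2) ν) (τ : ℝ) :
    HasDerivAt (fun t => ∫ l, Real.cos (t*l) ∂ν) (∫ l, -Real.sin (τ*l) * l ∂ν) τ := by
  have key := hasDerivAt_integral_of_dominated_loc_of_deriv_le (μ := ν)
    (F := fun t l => Real.cos (t*l)) (F' := fun t l => -Real.sin (t*l) * l)
    (x₀ := τ) (bound := fun l => |l|) (Metric.ball_mem_nhds τ one_pos)
    (by
      filter_upwards with t
      exact (Real.continuous_cos.comp (continuous_const.mul continuous_id)).aestronglyMeasurable)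
    (by
      apply Integrable.mono' (integrable_const (1:ℝ))
      · exact (Real.continuous_cos.comp (continuous_const.mul continuous_id)).aestronglyMeasurable
      · filter_upwards with l; simp [Real.abs_cos_le_one])
    (by
      apply Continuous.aestronglyMeasurable
      exact ((Real.continuous_sin.comp (continuous_const.mul continuous_id)).neg).mul continuous_id)
    (by
      filter_upwards with l t _
      have : |(-Real.sin (t*l)) * l| ≤ 1 * |l| := by
        rw [abs_mul, abs_neg]
        exact mul_le_mul_of_nonneg_right (Real.abs_sin_le_one _) (abs_nonneg _)
      simpa [abs_mul] using this)
    (aux_abs_int ν h2)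
    (by
      filter_upwards with l t _
      have h := ((hasDerivAt_id t).mul_const l).cos
      simpa using h)
  exact key.2
section
variable (ν : Measure ℝ) [IsProbabilityMeasure ν] (h2 : Integrable (fun l => l^2) ν)
include h2

lemma aux_Q_tendsto :
    Tendsto (fun τ => (∫ l, Real.sin (τ*l/2)^2 ∂ν) / τ^2) (𝓝[>] (0:ℝ))
      (𝓝 ((∫ l, l^2 ∂ν)/4)) := by
  have key := tendsto_integral_filter_of_dominated_convergence (μ := ν)
    (F := fun τ l => Real.sin (τ*l/2)^2 / τ^2) (f := fun l => l^2/4)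
    (l := 𝓝[>] (0:ℝ)) (bound := fun l => l^2/4)
    (by
      filter_upwards with τ
      exact (((Real.continuous_sin.comp ((continuous_const.mul continuous_id).div_const 2)).pow 2).div_const _).aestronglyMeasurable)
    (by
      filter_upwards [self_mem_nhdsWithin] with τ (hτ : 0 < τ)
      filter_upwards with l
      rw [norm_eq_abs, abs_div, abs_of_nonneg (sq_nonneg _), abs_of_nonneg (sq_nonneg _)]
      rw [div_le_div_iff₀ (by positivity) (by norm_num)]
      nlinarith [Real.sin_sq_le_sq (x := τ*l/2)])
    (h2.div_const 4)
    (by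
      filter_upwards with l
      have h := aux_sinsq_mul (l/2)
      have e1 : ∀ τ : ℝ, τ * (l/2) = τ*l/2 := fun τ => by ring
      have e2 : (l/2)^2 = l^2/4 := by ring
      simpa [e1, e2] using h)
  have e3 : (fun τ => ∫ l, Real.sin (τ*l/2)^2 / τ^2 ∂ν)
      = fun τ => (∫ l, Real.sin (τ*l/2)^2 ∂ν) / τ^2 := by
    funext τ; exact integral_div _ _
  rw [e3, show ∫ (a : ℝ), a ^ 2 / 4 ∂ν = (∫ l, l^2 ∂ν)/4 from integral_div _ _] at key
  exact key

lemma aux_I_tendsto :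
    Tendsto (fun τ => (∫ l, -Real.sin (τ*l) * l ∂ν) / τ) (𝓝[>] (0:ℝ))
      (𝓝 (-∫ l, l^2 ∂ν)) := by
  have key := tendsto_integral_filter_of_dominated_convergence (μ := ν)
    (F := fun τ l => -Real.sin (τ*l) * l / τ) (f := fun l => -(l^2))
    (l := 𝓝[>] (0:ℝ)) (bound := fun l => l^2)
    (by
      filter_upwards with τ
      exact ((((Real.continuous_sin.comp (continuous_const.mul continuous_id)).neg).mul continuous_id).div_const _).aestronglyMeasurable)
    (by
      filter_upwards [self_mem_nhdsWithin] with τ (hτ : 0 < τ)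
      filter_upwards with l
      rw [norm_eq_abs, abs_div, abs_mul, abs_neg]
      rw [div_le_iff₀ (by positivity)]
      have h1 : |Real.sin (τ*l)| ≤ |τ| * |l| := by
        rw [← abs_mul]; exact Real.abs_sin_le_abs
      calc |Real.sin (τ*l)| * |l| ≤ (|τ| * |l|) * |l| :=
            mul_le_mul_of_nonneg_right h1 (abs_nonneg _)
        _ = l^2 * |τ| := by rw [abs_of_pos hτ]; nlinarith [sq_abs l, abs_nonneg l]
    )
    h2
    (by
      filter_upwards with l
      have h := (aux_sin_mul l).mul tendsto_const_nhds (b := -l)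
      rw [show l * -l = -(l^2) by ring] at h
      apply h.congr
      intro τ; ring)
  have e3 : (fun τ => ∫ l, -Real.sin (τ*l) * l / τ ∂ν)
      = fun τ => (∫ l, -Real.sin (τ*l) * l ∂ν) / τ := by
    funext τ; exact integral_div _ _
  rw [e3] at key
  rw [integral_neg] at key
  exact key

end
lemma aux_P_tendsto (ν : Measure ℝ) [IsProbabilityMeasure ν]
    (h2 : Integrable (fun l => l^2) ν) (h4 : ¬ Integrable (fun l => l ^ 4) ν) :
    Tendsto (fun τ => (∫ l, l^2 * Real.sin (τ*l/2)^2 ∂ν) / τ^2) (𝓝[>] (0:ℝ)) atTop := by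
  apply tendsto_of_seq_tendsto
  intro u hu
  set F : ℕ → ℝ → ℝ := fun n l => l^2 * Real.sin (u n * l/2)^2 / (u n)^2 with hF
  set G : ℕ → ℝ → ENNReal := fun n l => ENNReal.ofReal (F n l) with hG
  have hmeas : ∀ n, Measurable (G n) := by
    intro n
    apply ENNReal.measurable_ofReal.comp
    exact (((continuous_pow 2).mul ((Real.continuous_sin.comp
      ((continuous_const.mul continuous_id).div_const 2)).pow 2)).div_const _).measurable
  -- pointwise limits
  have hpt : ∀ l : ℝ, Tendsto (fun n => F n l) atTop (𝓝 (l^4/4)) := by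
    intro l
    have h1 : Tendsto (fun τ : ℝ => l^2 * Real.sin (τ*l/2)^2 / τ^2) (𝓝[>] (0:ℝ))
        (𝓝 (l^2 * ((l/2)^2))) := by
      have h := (aux_sinsq_mul (l/2)).const_mul (l^2)
      apply h.congr
      intro τ
      rw [show τ * (l/2) = τ*l/2 by ring]
      ring
    have h2' := h1.comp hu
    rw [show l^2 * ((l/2)^2) = l^4/4 by ring] at h2'
    exact h2'
  have hptG : ∀ l : ℝ, Tendsto (fun n => G n l) atTop (𝓝 (ENNReal.ofReal (l^4/4))) :=
    fun l => (ENNReal.continuous_ofReal.tendsto _).comp (hpt l)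
  have hliminf : ∀ l : ℝ, Filter.liminf (fun n => G n l) atTop = ENNReal.ofReal (l^4/4) :=
    fun l => (hptG l).liminf_eq
  have htop : ∫⁻ l, ENNReal.ofReal (l^4/4) ∂ν = ⊤ := by
    by_contra hfin
    apply h4
    have hint : Integrable (fun l => l^4/4) ν := by
      constructor
      · exact ((continuous_pow 4).div_const 4).aestronglyMeasurable
      · rw [hasFiniteIntegral_iff_ofReal (by filter_upwards with l; positivity)]
        exact lt_top_iff_ne_top.2 hfin
    have := hint.const_mul 4
    apply this.congr
    filter_upwards with l
    field_simp
  have hFatou : (⊤ : ENNReal) ≤ Filter.liminf (fun n => ∫⁻ l, G n l ∂ν) atTop := by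
    calc (⊤ : ENNReal) = ∫⁻ l, ENNReal.ofReal (l^4/4) ∂ν := htop.symm
      _ = ∫⁻ l, Filter.liminf (fun n => G n l) atTop ∂ν := by
          apply lintegral_congr; intro l; rw [hliminf l]
      _ ≤ Filter.liminf (fun n => ∫⁻ l, G n l ∂ν) atTop := lintegral_liminf_le hmeas
  have hupos : ∀ᶠ n in atTop, 0 < u n := hu self_mem_nhdsWithin
  rw [tendsto_atTop]
  intro M
  have hlt : ∀ᶠ n in atTop, ENNReal.ofReal M < ∫⁻ l, G n l ∂ν :=
    eventually_lt_of_lt_liminf (lt_of_lt_of_le ENNReal.ofReal_lt_top hFatou)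
  filter_upwards [hlt, hupos] with n hn hun
  -- identify lintegral with integral
  have hIntF : Integrable (F n) ν := by
    have := (aux_lsinsq_int ν h2 (u n)).div_const ((u n)^2)
    exact this
  have heq : ∫⁻ l, G n l ∂ν = ENNReal.ofReal (∫ l, F n l ∂ν) := by
    rw [ofReal_integral_eq_lintegral_ofReal hIntF]
    filter_upwards with l
    simp only [hF]
    positivity
  have heq2 : ∫ l, F n l ∂ν = (∫ l, l^2 * Real.sin (u n * l/2)^2 ∂ν) / (u n)^2 :=
    integral_div _ _
  rw [heq, heq2] at hn
  by_contra hcon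
  push_neg at hcon
  exact absurd (ENNReal.ofReal_le_ofReal hcon.le) (not_le.2 hn)

lemma aux_E_ge (ν : Measure ℝ) [IsProbabilityMeasure ν]
    (h2 : Integrable (fun l => l^2) ν) (τ : ℝ) :
    4 * ((∫ l, l^2 * Real.sin (τ*l/2)^2 ∂ν) * (∫ l, Real.sin (τ*l/2)^2 ∂ν))
      ≤ 2 * (∫ l, l^2 ∂ν) * (∫ l, 2 * Real.sin (τ*l/2)^2 ∂ν)
        - (∫ l, Real.sin (τ*l) * l ∂ν)^2 := by
  have i_s2 := aux_sinsq_int ν h2 τ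
  have i_ls2 := aux_lsinsq_int ν h2 τ
  have i_lsin := aux_lsin_int ν h2 τ
  have i_2s2 : Integrable (fun l => 2 * Real.sin (τ*l/2)^2) ν := i_s2.const_mul 2
  -- product functions
  set g : ℝ × ℝ → ℝ := fun z =>
    z.1^2 * (2 * Real.sin (τ*z.2/2)^2) + (2 * Real.sin (τ*z.1/2)^2) * z.2^2
      - (Real.sin (τ*z.1) * z.1) * (Real.sin (τ*z.2) * z.2) with hgdef
  set h : ℝ × ℝ → ℝ := fun z =>
    2 * ((z.1^2 * Real.sin (τ*z.1/2)^2) * Real.sin (τ*z.2/2)^2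
      + Real.sin (τ*z.1/2)^2 * (z.2^2 * Real.sin (τ*z.2/2)^2)) with hhdef
  have ig1 : Integrable (fun z : ℝ × ℝ => z.1^2 * (2 * Real.sin (τ*z.2/2)^2)) (ν.prod ν) :=
    h2.mul_prod i_2s2
  have ig2 : Integrable (fun z : ℝ × ℝ => (2 * Real.sin (τ*z.1/2)^2) * z.2^2) (ν.prod ν) :=
    i_2s2.mul_prod h2
  have ig3 : Integrable (fun z : ℝ × ℝ =>
      (Real.sin (τ*z.1) * z.1) * (Real.sin (τ*z.2) * z.2)) (ν.prod ν) :=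
    i_lsin.mul_prod i_lsin
  have ih1 : Integrable (fun z : ℝ × ℝ =>
      (z.1^2 * Real.sin (τ*z.1/2)^2) * Real.sin (τ*z.2/2)^2) (ν.prod ν) :=
    i_ls2.mul_prod i_s2
  have ih2 : Integrable (fun z : ℝ × ℝ =>
      Real.sin (τ*z.1/2)^2 * (z.2^2 * Real.sin (τ*z.2/2)^2)) (ν.prod ν) :=
    i_s2.mul_prod i_ls2
  have ig : Integrable g (ν.prod ν) := (ig1.add ig2).sub ig3
  have ih : Integrable h (ν.prod ν) := ((ih1.add ih2).const_mul 2)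
  -- pointwise inequality
  have hle : h ≤ g := by
    intro z
    obtain ⟨l, m⟩ := z
    simp only [hgdef, hhdef]
    have hsl : Real.sin (τ*l) = 2 * Real.sin (τ*l/2) * Real.cos (τ*l/2) := by
      have := Real.sin_two_mul (τ*l/2)
      rw [show 2*(τ*l/2) = τ*l by ring] at this; exact this
    have hsm : Real.sin (τ*m) = 2 * Real.sin (τ*m/2) * Real.cos (τ*m/2) := by
      have := Real.sin_two_mul (τ*m/2)
      rw [show 2*(τ*m/2) = τ*m by ring] at this; exact this
    rw [hsl, hsm]
    have p1 := Real.sin_sq_add_cos_sq (τ*l/2)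
    have p2 := Real.sin_sq_add_cos_sq (τ*m/2)
    nlinarith [sq_nonneg (l * Real.sin (τ*m/2) * Real.cos (τ*l/2)
        - m * Real.sin (τ*l/2) * Real.cos (τ*m/2)),
      sq_nonneg (l * Real.sin (τ*m/2)), sq_nonneg (m * Real.sin (τ*l/2))]
  have hint := integral_mono ih ig hle
  -- compute both sides
  have eg : ∫ z, g z ∂(ν.prod ν)
      = (∫ l, l^2 ∂ν) * (∫ l, 2 * Real.sin (τ*l/2)^2 ∂ν)
        + (∫ l, 2 * Real.sin (τ*l/2)^2 ∂ν) * (∫ l, l^2 ∂ν)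
        - (∫ l, Real.sin (τ*l) * l ∂ν)^2 := by
    rw [hgdef]
    rw [integral_sub (f := fun z : ℝ × ℝ => z.1^2 * (2 * Real.sin (τ*z.2/2)^2) + (2 * Real.sin (τ*z.1/2)^2) * z.2^2)
      (g := fun z : ℝ × ℝ => (Real.sin (τ*z.1) * z.1) * (Real.sin (τ*z.2) * z.2)) (ig1.add ig2) ig3,
      integral_add ig1 ig2,
      integral_prod_mul (L := ℝ) (μ := ν) (ν := ν) (fun l => l^2) (fun l => 2 * Real.sin (τ*l/2)^2),
      integral_prod_mul (L := ℝ) (μ := ν) (ν := ν) (fun l => 2 * Real.sin (τ*l/2)^2) (fun l => l^2),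
      integral_prod_mul (L := ℝ) (μ := ν) (ν := ν) (fun l => Real.sin (τ*l) * l) (fun l => Real.sin (τ*l) * l),
      sq]
  have eh : ∫ z, h z ∂(ν.prod ν)
      = 2 * ((∫ l, l^2 * Real.sin (τ*l/2)^2 ∂ν) * (∫ l, Real.sin (τ*l/2)^2 ∂ν)
        + (∫ l, Real.sin (τ*l/2)^2 ∂ν) * (∫ l, l^2 * Real.sin (τ*l/2)^2 ∂ν)) := by
    rw [hhdef]
    rw [integral_const_mul, integral_add ih1 ih2,
      integral_prod_mul (L := ℝ) (μ := ν) (ν := ν) (fun l => l^2 * Real.sin (τ*l/2)^2) (fun l => Real.sin (τ*l/2)^2),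
      integral_prod_mul (L := ℝ) (μ := ν) (ν := ν) (fun l => Real.sin (τ*l/2)^2) (fun l => l^2 * Real.sin (τ*l/2)^2)]
  rw [eg, eh] at hint
  linarith

/-- If the spectral (probability) measure `ν` is symmetric with `λ₂ = ∫λ²dν ∈ (0,∞)` and
infinite fourth moment, and `r(τ) = ∫ cos(τλ) dν(λ)`, then with
`σ²(τ) = λ₂ - r'(τ)²/(1 - r(τ)²)` one has `r'(τ)/σ(τ) → 0` as `τ → 0⁺`. -/
theorem deriv_div_sigma_tendsto_zero (ν : Measure ℝ) [IsProbabilityMeasure ν]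
    (hsym : ν.map (fun x => -x) = ν)
    (lam2 : ℝ) (h2 : Integrable (fun l => l ^ 2) ν) (hlam2 : lam2 = ∫ l, l ^ 2 ∂ν)
    (hpos : 0 < lam2)
    (h4 : ¬ Integrable (fun l => l ^ 4) ν)
    (r : ℝ → ℝ) (hr : ∀ τ, r τ = ∫ l, Real.cos (τ * l) ∂ν) :
    Tendsto (fun τ => deriv r τ / Real.sqrt (lam2 - (deriv r τ) ^ 2 / (1 - (r τ) ^ 2)))
      (nhdsWithin 0 (Set.Ioi 0)) (nhds 0) := by
  have h2' : Integrable (fun l : ℝ => l^2) ν := h2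
  set L := nhdsWithin (0:ℝ) (Set.Ioi 0) with hLdef
  have hrfun : r = fun t => ∫ l, Real.cos (t*l) ∂ν := funext hr
  have hderiv : ∀ τ, deriv r τ = ∫ l, -Real.sin (τ*l) * l ∂ν := by
    intro τ; rw [hrfun]; exact (aux_deriv ν h2' τ).deriv
  set Q : ℝ → ℝ := fun τ => ∫ l, Real.sin (τ*l/2)^2 ∂ν with hQdef
  set P : ℝ → ℝ := fun τ => ∫ l, l^2 * Real.sin (τ*l/2)^2 ∂ν with hPdef
  -- 1 - r τ = 2 Q τ
  have h1r : ∀ τ, 1 - r τ = 2 * Q τ := by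
    intro τ
    have hcosint : Integrable (fun l => Real.cos (τ*l)) ν := by
      apply Integrable.mono' (integrable_const (1:ℝ))
      · exact (Real.continuous_cos.comp (continuous_const.mul continuous_id)).aestronglyMeasurable
      · filter_upwards with l; simp [Real.abs_cos_le_one]
    have e1 : (1:ℝ) - r τ = ∫ l, (1 - Real.cos (τ*l)) ∂ν := by
      rw [hr τ, integral_sub (integrable_const 1) hcosint]
      simp
    rw [e1]
    have e2 : ∀ l : ℝ, (1:ℝ) - Real.cos (τ*l) = 2 * Real.sin (τ*l/2)^2 :=
      fun l => aux_one_sub_cos (τ*l)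
    calc ∫ l, (1 - Real.cos (τ*l)) ∂ν = ∫ l, 2 * Real.sin (τ*l/2)^2 ∂ν := by
          apply integral_congr_ae; filter_upwards with l; exact e2 l
      _ = 2 * Q τ := integral_const_mul 2 _
  -- limits
  have hQlim : Tendsto (fun τ => Q τ / τ^2) L (𝓝 (lam2/4)) := by
    have := aux_Q_tendsto ν h2'
    rwa [← hlam2] at this
  have hPlim : Tendsto (fun τ => P τ / τ^2) L atTop := aux_P_tendsto ν h2' h4
  have hIlim : Tendsto (fun τ => deriv r τ / τ) L (𝓝 (-lam2)) := by
    have := aux_I_tendsto ν h2'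
    rw [← hlam2] at this
    apply this.congr
    intro τ; rw [hderiv τ]
  -- E τ and its inequality
  set E : ℝ → ℝ := fun τ => 2*lam2*(1 - r τ) - (deriv r τ)^2 with hEdef
  have hEineq : ∀ τ, 4 * (P τ * Q τ) ≤ E τ := by
    intro τ
    have key := aux_E_ge ν h2' τ
    have e3 : ∫ l, 2 * Real.sin (τ*l/2)^2 ∂ν = 2 * Q τ := integral_const_mul 2 _
    have e4 : deriv r τ = -∫ l, Real.sin (τ*l) * l ∂ν := by
      rw [hderiv τ]
      rw [← integral_neg]
      apply integral_congr_ae; filter_upwards with l; ring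
    rw [e3, ← hlam2] at key
    have e5 : (deriv r τ)^2 = (∫ l, Real.sin (τ*l) * l ∂ν)^2 := by rw [e4]; ring
    rw [hEdef]
    simp only [h1r τ]
    rw [e5]
    linarith
  -- E/τ⁴ → ∞
  have hEdiv : Tendsto (fun τ => E τ / τ^4) L atTop := by
    have hprod : Tendsto (fun τ => 4 * ((P τ/τ^2) * (Q τ/τ^2))) L atTop := by
      apply Tendsto.const_mul_atTop (by norm_num : (0:ℝ) < 4)
      exact hPlim.atTop_mul_pos (by linarith : (0:ℝ) < lam2/4) hQlim
    apply tendsto_atTop_mono' L _ hprod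
    filter_upwards [self_mem_nhdsWithin] with τ (hτ : 0 < τ)
    have e6 : 4 * ((P τ/τ^2) * (Q τ/τ^2)) = 4 * (P τ * Q τ) / τ^4 := by
      rw [div_mul_div_comm, show τ^2*τ^2 = τ^4 by ring, mul_div_assoc]
      ring
    rw [e6]
    exact div_le_div_of_nonneg_right (hEineq τ) (by positivity) |>.trans_eq rfl
  -- (1 - r)/τ² → lam2/2 and r → 1
  have h1mr : Tendsto (fun τ => (1 - r τ)/τ^2) L (𝓝 (lam2/2)) := by
    have := hQlim.const_mul 2
    rw [show 2*(lam2/4) = lam2/2 by ring] at this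
    apply this.congr
    intro τ; rw [h1r τ]; ring
  have hrlim : Tendsto r L (𝓝 1) := by
    have hτ2 : Tendsto (fun τ : ℝ => τ^2) L (𝓝 0) := by
      have : Tendsto (fun τ : ℝ => τ^2) (𝓝 (0:ℝ)) (𝓝 ((0:ℝ)^2)) := (continuous_pow 2).tendsto 0
      rw [show ((0:ℝ)^2) = 0 by norm_num] at this
      exact this.mono_left nhdsWithin_le_nhds
    have h0 := h1mr.mul hτ2
    rw [mul_zero] at h0
    have h0' : Tendsto (fun τ => 1 - r τ) L (𝓝 0) := by
      apply h0.congr'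
      filter_upwards [self_mem_nhdsWithin] with τ (hτ : 0 < τ)
      field_simp
    have := tendsto_const_nhds (x := (1:ℝ)) (f := L) |>.sub h0'
    rw [sub_zero] at this
    apply this.congr
    intro τ; ring
  have h1mr2 : Tendsto (fun τ => (1 - (r τ)^2)/τ^2) L (𝓝 lam2) := by
    have hsum : Tendsto (fun τ => 1 + r τ) L (𝓝 2) := by
      have := tendsto_const_nhds (x := (1:ℝ)) (f := L) |>.add hrlim
      norm_num at this; exact this
    have := h1mr.mul hsum
    rw [show lam2/2*2 = lam2 by ring] at this
    apply this.congr
    intro τ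
    rw [div_mul_eq_mul_div]
    congr 1; ring
  -- D and positivity
  set D : ℝ → ℝ := fun τ => E τ/τ^4 - lam2*((1 - r τ)/τ^2)^2 with hDdef
  have hDlim : Tendsto D L atTop := by
    have hneg : Tendsto (fun τ => -(lam2*((1 - r τ)/τ^2)^2)) L (𝓝 (-(lam2*(lam2/2)^2))) :=
      (((h1mr.pow 2).const_mul lam2).neg)
    have := hEdiv.atTop_add hneg
    apply this.congr
    intro τ; rw [hDdef]; ring
  have hτpos : ∀ᶠ τ in L, 0 < τ := by
    filter_upwards [self_mem_nhdsWithin] with τ (hτ : 0 < τ); exact hτ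
  have hDpos : ∀ᶠ τ in L, 0 < D τ := hDlim.eventually (eventually_gt_atTop 0)
  have h1mr2pos : ∀ᶠ τ in L, 0 < 1 - (r τ)^2 := by
    have hev := h1mr2.eventually (eventually_gt_nhds (by linarith : lam2/2 < lam2))
    filter_upwards [hev, hτpos] with τ hτ1 hτ2
    have hq : 0 < (1 - (r τ)^2)/τ^2 := lt_trans (by linarith) hτ1
    have := mul_pos hq (by positivity : (0:ℝ) < τ^2)
    rwa [div_mul_cancel₀ _ (by positivity : (τ:ℝ)^2 ≠ 0)] at this
  -- identity  S = D τ⁴ / (1-r²)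
  have hid : ∀ᶠ τ in L, lam2 - (deriv r τ)^2/(1 - (r τ)^2) = D τ * τ^4 / (1 - (r τ)^2) := by
    filter_upwards [hτpos, h1mr2pos] with τ hτ hmr
    rw [hDdef, hEdef]
    have hne : (1:ℝ) - (r τ)^2 ≠ 0 := ne_of_gt hmr
    field_simp
    ring
  have hSpos : ∀ᶠ τ in L, 0 < lam2 - (deriv r τ)^2/(1 - (r τ)^2) := by
    filter_upwards [hid, hDpos, h1mr2pos, hτpos] with τ e hD hmr hτ
    rw [e]; positivity
  -- τ²/S → 0
  have htau2S : Tendsto (fun τ => τ^2 / (lam2 - (deriv r τ)^2/(1 - (r τ)^2))) L (𝓝 0) := by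
    have hq := h1mr2.div_atTop hDlim
    apply hq.congr'
    filter_upwards [hid, hDpos, h1mr2pos, hτpos] with τ e hD hmr hτ
    rw [e, div_div, div_eq_div_iff (by positivity : τ^2 * D τ ≠ 0) (by positivity : D τ * τ^4 / (1 - (r τ)^2) ≠ 0)]
    field_simp
  -- final assembly
  have hfin : Tendsto (fun τ => (deriv r τ / τ) *
      Real.sqrt (τ^2 / (lam2 - (deriv r τ)^2/(1 - (r τ)^2)))) L (𝓝 ((-lam2) * Real.sqrt 0)) :=
    hIlim.mul ((Real.continuous_sqrt.tendsto 0).comp htau2S)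
  rw [Real.sqrt_zero, mul_zero] at hfin
  apply hfin.congr'
  filter_upwards [hτpos, hSpos] with τ hτ hS
  rw [Real.sqrt_div (by positivity : (0:ℝ) ≤ τ^2), Real.sqrt_sq hτ.le]
  rw [div_mul_div_comm, mul_comm τ _, ← div_mul_div_comm, div_self hτ.ne', mul_one]
end
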